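/- arXiv:1407.5409 — 2 statements merged into one kernel-verified Lean document; each statement's English description precedes it below -/
import Mathlib

section
/- Let G be a finite d-regular graph on v(G) vertices and t ≥ 0. Define p(G,t) = 2t·M'(G,t)/(v(G)·M(G,t)). Then p(G,t) ≤ d·t/(1+t). -/
open scoped Classical
open Finset

/-- Number of matchings with exactly `k` edges in `G`. -/
noncomputable def numMatchings {V : Type*} [Fintype V] (G : SimpleGraph V) (k : ℕ) : ℕ :=
  (G.edgeFinset.powerset.filter (fun M => M.card = k ∧
    ∀ e ∈ M, ∀ f ∈ M, e ≠ f → ∀ v : V, ¬(v ∈ e ∧ v ∈ f))).card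

/-- Matching generating function `M(G,t) = Σ_k m_k(G) t^k`. -/
noncomputable def matchGen {V : Type*} [Fintype V] (G : SimpleGraph V) (t : ℝ) : ℝ :=
  ∑ k ∈ Finset.range (Fintype.card V + 1), (numMatchings G k : ℝ) * t ^ k

/-- Derivative `M'(G,t) = Σ_k k·m_k(G) t^(k-1)`. -/
noncomputable def matchGenDeriv {V : Type*} [Fintype V] (G : SimpleGraph V) (t : ℝ) : ℝ :=
  ∑ k ∈ Finset.range (Fintype.card V + 1), (k : ℝ) * (numMatchings G k : ℝ) * t ^ (k - 1)

/-- The graph obtained from `G` by deleting all vertices in `S` (kept as isolated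
vertices, which does not affect matchings). -/
def deleteVerts {V : Type*} (G : SimpleGraph V) (S : Set V) : SimpleGraph V where
  Adj a b := G.Adj a b ∧ a ∉ S ∧ b ∉ S
  symm := ⟨fun _ _ h => ⟨h.1.symm, h.2.2, h.2.1⟩⟩
  loopless := ⟨fun a h => G.irrefl h.1⟩

/-!
Split the matchings of `G` according to whether they cover a fixed vertex `v`: write `C_v` and
`U_v` for the total weight `t ^ |M|` of the matchings that cover, resp. avoid, `v`, so that
`C_v + U_v = M(G,t)`. Removing from a matching the edge at `v` lands injectively in the matchings
avoiding `v`, so `C_v ≤ d t U_v`, whence `(1 + t) C_v ≤ d t M(G,t)`. Since a matching with `k`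
edges covers `2k` vertices, `∑_v C_v = 2 t M'(G,t)`, and summing over `v` gives the bound.
-/

namespace SimpleGraph

variable {V : Type*} [Fintype V] (G : SimpleGraph V)

noncomputable def matchings : Finset (Finset (Sym2 V)) :=
  G.edgeFinset.powerset.filter fun M =>
    ∀ e ∈ M, ∀ f ∈ M, e ≠ f → ∀ v : V, ¬(v ∈ e ∧ v ∈ f)

variable {G}

lemma mem_matchings {M : Finset (Sym2 V)} :
    M ∈ G.matchings ↔ M ⊆ G.edgeFinset ∧
      ∀ e ∈ M, ∀ f ∈ M, e ≠ f → ∀ v : V, ¬(v ∈ e ∧ v ∈ f) := by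
  simp [matchings]

lemma mem_matchings_of_subset {M N : Finset (Sym2 V)} (hM : M ∈ G.matchings) (hNM : N ⊆ M) :
    N ∈ G.matchings := by
  rw [mem_matchings] at hM ⊢
  exact ⟨hNM.trans hM.1, fun e he f hf => hM.2 e (hNM he) f (hNM hf)⟩

lemma card_biUnion_toFinset_of_mem_matchings {M : Finset (Sym2 V)} (hM : M ∈ G.matchings) :
    #(M.biUnion Sym2.toFinset) = 2 * #M := by
  rw [mem_matchings] at hM
  have hdisj : (M : Set (Sym2 V)).PairwiseDisjoint Sym2.toFinset := by
    intro e he f hf hef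
    simp only [Function.onFun, Finset.disjoint_left, Sym2.mem_toFinset]
    exact fun v hve hvf => hM.2 e he f hf hef v ⟨hve, hvf⟩
  rw [card_biUnion hdisj, sum_congr rfl fun e he => Sym2.card_toFinset_of_not_isDiag e
    (G.not_isDiag_of_mem_edgeSet (mem_edgeFinset.1 (hM.1 he))), sum_const, smul_eq_mul, mul_comm]

lemma card_le_of_mem_matchings {M : Finset (Sym2 V)} (hM : M ∈ G.matchings) :
    #M ≤ Fintype.card V := by
  have := card_le_univ (M.biUnion Sym2.toFinset)
  rw [card_biUnion_toFinset_of_mem_matchings hM] at this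
  omega

lemma numMatchings_eq_card_filter (k : ℕ) :
    numMatchings G k = #(G.matchings.filter fun M => #M = k) := by
  rw [numMatchings, matchings, filter_filter]
  simp only [and_comm]

lemma sum_range_numMatchings_mul (f : ℕ → ℝ) :
    ∑ k ∈ range (Fintype.card V + 1), (numMatchings G k : ℝ) * f k =
      ∑ M ∈ G.matchings, f #M := by
  have hmaps : ∀ M ∈ G.matchings, #M ∈ range (Fintype.card V + 1) := fun M hM =>
    mem_range.2 (Nat.lt_succ_of_le (card_le_of_mem_matchings hM))
  rw [← sum_fiberwise_of_maps_to hmaps]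
  refine sum_congr rfl fun k _ => ?_
  rw [numMatchings_eq_card_filter, sum_congr rfl fun M hM => congrArg f (mem_filter.1 hM).2,
    sum_const, nsmul_eq_mul]

lemma matchGen_eq_sum_matchings (t : ℝ) : matchGen G t = ∑ M ∈ G.matchings, t ^ #M :=
  sum_range_numMatchings_mul (t ^ ·)

lemma mul_matchGenDeriv_eq_sum_matchings (t : ℝ) :
    t * matchGenDeriv G t = ∑ M ∈ G.matchings, (#M : ℝ) * t ^ #M := by
  rw [← sum_range_numMatchings_mul fun k => (k : ℝ) * t ^ k, matchGenDeriv, mul_sum]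
  refine sum_congr rfl fun k _ => ?_
  rcases k with _ | k
  · simp
  · rw [Nat.add_sub_cancel, pow_succ]
    ring

variable (G)

noncomputable def coveringWeight (t : ℝ) (v : V) : ℝ :=
  ∑ M ∈ G.matchings.filter (fun M => ∃ e ∈ M, v ∈ e), t ^ #M

noncomputable def avoidingWeight (t : ℝ) (v : V) : ℝ :=
  ∑ M ∈ G.matchings.filter (fun M => ¬∃ e ∈ M, v ∈ e), t ^ #M

lemma coveringWeight_add_avoidingWeight (t : ℝ) (v : V) :
    G.coveringWeight t v + G.avoidingWeight t v = matchGen G t := by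
  rw [matchGen_eq_sum_matchings]
  exact sum_filter_add_sum_filter_not _ _ _

lemma sum_coveringWeight (t : ℝ) :
    ∑ v, G.coveringWeight t v = 2 * (t * matchGenDeriv G t) := by
  simp only [coveringWeight, sum_filter]
  rw [sum_comm, mul_matchGenDeriv_eq_sum_matchings, mul_sum]
  refine sum_congr rfl fun M hM => ?_
  have hcovered : univ.filter (fun v => ∃ e ∈ M, v ∈ e) = M.biUnion Sym2.toFinset := by
    ext v
    simp
  rw [← sum_filter, sum_const, hcovered, card_biUnion_toFinset_of_mem_matchings hM, nsmul_eq_mul]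
  push_cast
  ring

variable {G}

lemma sum_matchings_mem_le_mul_avoidingWeight {t : ℝ} (ht : 0 ≤ t) {v : V} {e : Sym2 V}
    (hv : v ∈ e) :
    ∑ M ∈ G.matchings.filter (e ∈ ·), t ^ #M ≤ t * G.avoidingWeight t v := by
  have herase : ∀ M ∈ G.matchings.filter (e ∈ ·), t ^ #M = t * t ^ #(M.erase e) := by
    intro M hM
    rw [card_erase_of_mem (mem_filter.1 hM).2, ← pow_succ',
      Nat.sub_add_cancel (card_pos.2 ⟨e, (mem_filter.1 hM).2⟩)]
  have hinj : Set.InjOn (·.erase e) (G.matchings.filter (e ∈ ·) : Set (Finset (Sym2 V))) :=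
    fun M hM N hN hMN => by
      rw [← insert_erase (mem_filter.1 hM).2, ← insert_erase (mem_filter.1 hN).2]
      exact congrArg (insert e) hMN
  have himage : (G.matchings.filter (e ∈ ·)).image (·.erase e) ⊆
      G.matchings.filter (fun M => ¬∃ f ∈ M, v ∈ f) := by
    simp only [subset_iff, mem_image, mem_filter]
    rintro _ ⟨M, ⟨hM, heM⟩, rfl⟩
    refine ⟨mem_matchings_of_subset hM (erase_subset _ _), ?_⟩
    rintro ⟨f, hf, hvf⟩
    exact (mem_matchings.1 hM).2 f (mem_of_mem_erase hf) e heM (ne_of_mem_erase hf) v ⟨hvf, hv⟩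
  rw [sum_congr rfl herase, ← mul_sum, ← sum_image (f := (t ^ #·)) hinj, avoidingWeight]
  exact mul_le_mul_of_nonneg_left
    (sum_le_sum_of_subset_of_nonneg himage fun _ _ _ => pow_nonneg ht _) ht

lemma coveringWeight_le_degree_mul {t : ℝ} (ht : 0 ≤ t) (v : V) :
    G.coveringWeight t v ≤ G.degree v * (t * G.avoidingWeight t v) := by
  have hsplit : G.matchings.filter (fun M => ∃ e ∈ M, v ∈ e) =
      (G.incidenceFinset v).biUnion fun e => G.matchings.filter (e ∈ ·) := by
    ext M
    simp only [mem_filter, mem_biUnion, mem_incidenceFinset]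
    constructor
    · rintro ⟨hM, e, he, hv⟩
      exact ⟨e, ⟨mem_edgeFinset.1 ((mem_matchings.1 hM).1 he), hv⟩, hM, he⟩
    · rintro ⟨e, ⟨-, hv⟩, hM, he⟩
      exact ⟨hM, e, he, hv⟩
  have hdisj : (G.incidenceFinset v : Set (Sym2 V)).PairwiseDisjoint
      fun e => G.matchings.filter (e ∈ ·) := by
    intro e he f hf hef
    simp only [Function.onFun, Finset.disjoint_left, mem_filter]
    rintro M ⟨hM, heM⟩ ⟨-, hfM⟩
    exact (mem_matchings.1 hM).2 e heM f hfM hef v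
      ⟨((G.mem_incidenceFinset v e).1 he).2, ((G.mem_incidenceFinset v f).1 hf).2⟩
  rw [coveringWeight, hsplit, sum_biUnion hdisj]
  calc ∑ e ∈ G.incidenceFinset v, ∑ M ∈ G.matchings.filter (e ∈ ·), t ^ #M
      ≤ ∑ _e ∈ G.incidenceFinset v, t * G.avoidingWeight t v :=
        sum_le_sum fun e he =>
          sum_matchings_mem_le_mul_avoidingWeight ht ((G.mem_incidenceFinset v e).1 he).2
    _ = G.degree v * (t * G.avoidingWeight t v) := by
        rw [sum_const, card_incidenceFinset_eq_degree, nsmul_eq_mul]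

lemma one_add_mul_coveringWeight_le {t : ℝ} (ht : 0 ≤ t) (v : V) :
    (1 + t) * G.coveringWeight t v ≤ G.degree v * t * matchGen G t := by
  have hcover := coveringWeight_le_degree_mul (G := G) ht v
  have hC : 0 ≤ G.coveringWeight t v := sum_nonneg fun _ _ => pow_nonneg ht _
  have hU : 0 ≤ G.avoidingWeight t v := sum_nonneg fun _ _ => pow_nonneg ht _
  rw [← coveringWeight_add_avoidingWeight]
  rcases Nat.eq_zero_or_pos (G.degree v) with hdeg | hdeg
  · rw [hdeg, Nat.cast_zero, zero_mul] at hcover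
    rw [le_antisymm hcover hC, hdeg]
    simp
  · have hdeg : (1 : ℝ) ≤ G.degree v := by exact_mod_cast hdeg
    nlinarith [mul_nonneg (mul_nonneg ht hC) (sub_nonneg.2 hdeg)]

end SimpleGraph

open SimpleGraph in
theorem stmt5 {V : Type*} [Fintype V] (G : SimpleGraph V) (d : ℕ)
    (hreg : G.IsRegularOfDegree d) (t : ℝ) (ht : 0 ≤ t) :
    2 * t * matchGenDeriv G t / ((Fintype.card V : ℝ) * matchGen G t) ≤ d * t / (1 + t) := by
  have h1t : (0 : ℝ) < 1 + t := by linarith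
  have hM : 0 ≤ matchGen G t := by
    rw [matchGen_eq_sum_matchings]
    exact sum_nonneg fun _ _ => pow_nonneg ht _
  have hvertex : ∀ v, G.coveringWeight t v ≤ d * t / (1 + t) * matchGen G t := fun v => by
    rw [div_mul_eq_mul_div, le_div_iff₀' h1t, ← hreg v]
    exact one_add_mul_coveringWeight_le ht v
  refine div_le_of_le_mul₀ (by positivity) (by positivity) ?_
  calc 2 * t * matchGenDeriv G t = ∑ v, G.coveringWeight t v := by
        rw [sum_coveringWeight, mul_assoc]
    _ ≤ ∑ _v : V, d * t / (1 + t) * matchGen G t := sum_le_sum fun v _ => hvertex v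
    _ = d * t / (1 + t) * (Fintype.card V * matchGen G t) := by
        rw [sum_const, card_univ, nsmul_eq_mul]
        ring
end

section
/- Let G be a finite d-regular edge-transitive graph on v(G) vertices and t ≥ 0. Then p(G,t) = 2t·M'(G,t)/(v(G)·M(G,t)) satisfies p(G,t) ≤ d·t/(1+d·t). -/
open scoped Classical
open Finset

/-!
Fix an edge `uw` and let `C(t)` be the matching generating function of `G - {u, w}`; by
edge-transitivity it is the same for every edge. Removing one edge from a `k`-matching and double
counting gives `t M'(t) ≤ |E| t C(t)`. A matching of `G` either avoids `u`, and is then a matching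
of `G - u ⊇ G - {u, w}`, or contains exactly one of the `d` edges `ux`, and then the rest is a
matching of `G - {u, x}`; hence `(1 + d t) C(t) ≤ M(t)`. With `2 |E| = v d` this gives
`2 t M'(t) (1 + d t) ≤ d t v M(t)`.
-/

section Series

variable {a b : ℕ → ℝ} {t : ℝ}

lemma mul_sum_range_succ_deriv_le {E : ℝ} (ht : 0 ≤ t) (n : ℕ)
    (h : ∀ i, (i + 1) * a (i + 1) ≤ E * b i) :
    t * ∑ k ∈ range (n + 1), k * a k * t ^ (k - 1) ≤ E * t * ∑ j ∈ range n, b j * t ^ j := by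
  rw [sum_range_succ', mul_add, mul_sum, mul_sum]
  simp only [CharP.cast_eq_zero, zero_mul, mul_zero, add_zero, add_tsub_cancel_right,
    Nat.cast_succ]
  refine sum_le_sum fun i _ => ?_
  calc t * ((i + 1) * a (i + 1) * t ^ i) = (i + 1) * a (i + 1) * t ^ (i + 1) := by ring
    _ ≤ E * b i * t ^ (i + 1) := mul_le_mul_of_nonneg_right (h i) (pow_nonneg ht _)
    _ = E * t * (b i * t ^ i) := by ring

lemma one_add_mul_mul_sum_range_le {d : ℝ} (ht : 0 ≤ t) (n : ℕ) (hb : ∀ j, 0 ≤ b j)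
    (h₀ : b 0 ≤ a 0) (h : ∀ i, b (i + 1) + d * b i ≤ a (i + 1)) :
    (1 + d * t) * ∑ j ∈ range n, b j * t ^ j ≤ ∑ k ∈ range (n + 1), a k * t ^ k := by
  have hshift : ∑ j ∈ range (n + 1), b j * t ^ j + d * t * ∑ j ∈ range n, b j * t ^ j ≤
      ∑ k ∈ range (n + 1), a k * t ^ k := by
    rw [sum_range_succ' _ n, sum_range_succ' _ n, mul_sum, add_right_comm, ← sum_add_distrib]
    gcongr with i
    · calc b (i + 1) * t ^ (i + 1) + d * t * (b i * t ^ i)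
          = (b (i + 1) + d * b i) * t ^ (i + 1) := by ring
        _ ≤ a (i + 1) * t ^ (i + 1) := mul_le_mul_of_nonneg_right (h i) (pow_nonneg ht _)
  have htail : 0 ≤ b n * t ^ n := mul_nonneg (hb n) (pow_nonneg ht n)
  rw [sum_range_succ] at hshift
  linarith

end Series

-- `b = 0` is allowed (then `a / b = 0`): in the application `b = card V * M(t)` vanishes when `V`
-- is empty.
lemma div_le_div_of_mul_le_mul_of_nonneg {a b c e : ℝ} (hb : 0 ≤ b) (hc : 0 ≤ c) (he : 0 < e)
    (h : a * e ≤ c * b) : a / b ≤ c / e := by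
  rcases hb.eq_or_lt with rfl | hb
  · rw [div_zero]; positivity
  · rwa [div_le_div_iff₀ hb he]

section DeleteVerts

variable {V W : Type*}

lemma deleteVerts_anti (G : SimpleGraph V) {S T : Set V} (h : S ⊆ T) :
    deleteVerts G T ≤ deleteVerts G S :=
  fun _ _ hab => ⟨hab.1, fun ha => hab.2.1 (h ha), fun hb => hab.2.2 (h hb)⟩

def deleteVertsIso {G : SimpleGraph V} {H : SimpleGraph W} (φ : G ≃g H) (S : Set V) :
    deleteVerts G S ≃g deleteVerts H (φ '' S) where
  toEquiv := φ.toEquiv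
  map_rel_iff' {a b} := by
    change H.Adj (φ a) (φ b) ∧ φ a ∉ φ '' S ∧ φ b ∉ φ '' S ↔ _
    rw [φ.map_adj_iff, φ.injective.mem_set_image, φ.injective.mem_set_image]
    rfl

lemma mem_edgeSet_deleteVerts {G : SimpleGraph V} {S : Set V} {e : Sym2 V} :
    e ∈ (deleteVerts G S).edgeSet ↔ e ∈ G.edgeSet ∧ ∀ v ∈ e, v ∉ S := by
  induction e using Sym2.ind with
  | _ a b => simp [deleteVerts]

end DeleteVerts

section Matchings

variable {V W : Type*} [Fintype V] [Fintype W]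

noncomputable def matchings (G : SimpleGraph V) (k : ℕ) : Finset (Finset (Sym2 V)) :=
  G.edgeFinset.powerset.filter (fun M => M.card = k ∧
    ∀ e ∈ M, ∀ f ∈ M, e ≠ f → ∀ v : V, ¬(v ∈ e ∧ v ∈ f))

lemma card_matchings (G : SimpleGraph V) (k : ℕ) : #(matchings G k) = numMatchings G k := rfl

variable {G : SimpleGraph V} {k : ℕ} {M : Finset (Sym2 V)}

lemma mem_matchings : M ∈ matchings G k ↔ (∀ e ∈ M, e ∈ G.edgeSet) ∧ #M = k ∧
    ∀ e ∈ M, ∀ f ∈ M, e ≠ f → ∀ v : V, ¬(v ∈ e ∧ v ∈ f) := by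
  simp [matchings, subset_iff]

lemma numMatchings_zero : numMatchings G 0 = 1 := by
  rw [← card_matchings, card_eq_one]
  refine ⟨∅, eq_singleton_iff_unique_mem.2 ⟨by simp [mem_matchings], fun M hM => ?_⟩⟩
  exact card_eq_zero.1 (mem_matchings.1 hM).2.1

lemma numMatchings_le_of_injective {H : SimpleGraph W} (f : G →g H) (hf : Function.Injective f)
    (k : ℕ) : numMatchings G k ≤ numMatchings H k := by
  have hf₂ : Function.Injective (Sym2.map f) := Sym2.map.injective hf
  refine card_le_card_of_injOn (image (Sym2.map f)) (fun M hM => ?_)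
    (image_injective hf₂).injOn
  obtain ⟨hedge, hcard, hdisj⟩ := mem_matchings.1 hM
  refine mem_matchings.2 ⟨?_, by rw [card_image_of_injective _ hf₂, hcard], ?_⟩
  · simp only [mem_image, forall_exists_index, and_imp, forall_apply_eq_imp_iff₂]
    exact fun e he => f.map_mem_edgeSet (hedge e he)
  · simp only [mem_image, forall_exists_index, and_imp, forall_apply_eq_imp_iff₂, Sym2.mem_map]
    rintro e he e' he' hne _ ⟨⟨x, hx, rfl⟩, ⟨y, hy, hxy⟩⟩
    cases hf hxy
    exact hdisj e he e' he' (fun h => hne (h ▸ rfl)) x ⟨hx, hy⟩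

lemma numMatchings_congr {H : SimpleGraph W} (φ : G ≃g H) (k : ℕ) :
    numMatchings G k = numMatchings H k :=
  le_antisymm (numMatchings_le_of_injective φ.toHom φ.injective k)
    (numMatchings_le_of_injective φ.symm.toHom φ.symm.injective k)

lemma numMatchings_mono {H : SimpleGraph V} (h : G ≤ H) (k : ℕ) :
    numMatchings G k ≤ numMatchings H k :=
  numMatchings_le_of_injective (SimpleGraph.Hom.ofLE h) Function.injective_id k

end Matchings

section MatchingsOfDeleteVerts

variable {V W : Type*} [Fintype V] [Fintype W] {G : SimpleGraph V} {S : Set V} {k : ℕ}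
  {M : Finset (Sym2 V)} {e : Sym2 V}

lemma numMatchings_deleteVerts_map {H : SimpleGraph W} (φ : G ≃g H) (e : Sym2 V) (k : ℕ) :
    numMatchings (deleteVerts H {w | w ∈ e.map φ}) k =
      numMatchings (deleteVerts G {v | v ∈ e}) k := by
  have hS : {w | w ∈ e.map φ} = φ '' {v | v ∈ e} := by ext; simp [Sym2.mem_map]
  rw [hS, numMatchings_congr (deleteVertsIso φ _)]

lemma mem_matchings_deleteVerts :
    M ∈ matchings (deleteVerts G S) k ↔ M ∈ matchings G k ∧ ∀ e ∈ M, ∀ v ∈ e, v ∉ S := by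
  simp only [mem_matchings, mem_edgeSet_deleteVerts]
  constructor
  · rintro ⟨hedge, hcard, hdisj⟩
    exact ⟨⟨fun e he => (hedge e he).1, hcard, hdisj⟩, fun e he => (hedge e he).2⟩
  · rintro ⟨⟨hedge, hcard, hdisj⟩, hS⟩
    exact ⟨fun e he => ⟨hedge e he, hS e he⟩, hcard, hdisj⟩

lemma notMem_of_mem_matchings_deleteVerts (hM : M ∈ matchings (deleteVerts G S) k) {v : V}
    (hve : v ∈ e) (hvS : v ∈ S) : e ∉ M :=
  fun he => (mem_matchings_deleteVerts.1 hM).2 e he v hve hvS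

lemma insert_mem_matchings (he : e ∈ G.edgeSet)
    (hM : M ∈ matchings (deleteVerts G {v | v ∈ e}) k) : insert e M ∈ matchings G (k + 1) := by
  have heM : e ∉ M := notMem_of_mem_matchings_deleteVerts hM e.out_fst_mem e.out_fst_mem
  obtain ⟨hM, hoff⟩ := mem_matchings_deleteVerts.1 hM
  obtain ⟨hedge, hcard, hdisj⟩ := mem_matchings.1 hM
  refine mem_matchings.2 ⟨?_, by rw [card_insert_of_notMem heM, hcard], ?_⟩
  · simpa [he] using hedge
  · simp only [mem_insert, forall_eq_or_imp]
    refine ⟨⟨fun h => absurd rfl h, fun f hf _ v hv => hoff f hf v hv.2 hv.1⟩,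
      fun f hf => ⟨fun _ v hv => hoff f hf v hv.1 hv.2, hdisj f hf⟩⟩

lemma erase_mem_matchings_deleteVerts (hM : M ∈ matchings G (k + 1)) (he : e ∈ M) :
    M.erase e ∈ matchings (deleteVerts G {v | v ∈ e}) k := by
  obtain ⟨hedge, hcard, hdisj⟩ := mem_matchings.1 hM
  refine mem_matchings_deleteVerts.2 ⟨mem_matchings.2 ⟨fun f hf => hedge f (mem_of_mem_erase hf),
    by rw [card_erase_of_mem he, hcard, Nat.add_sub_cancel], fun f hf g hg =>
      hdisj f (mem_of_mem_erase hf) g (mem_of_mem_erase hg)⟩, fun f hf v hvf hve => ?_⟩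
  exact hdisj f (mem_of_mem_erase hf) e he (ne_of_mem_erase hf) v ⟨hvf, hve⟩

end MatchingsOfDeleteVerts

section Recursions

variable {V : Type*} [Fintype V]

lemma succ_mul_numMatchings_succ_le (G : SimpleGraph V) (k : ℕ) :
    (k + 1) * numMatchings G (k + 1) ≤
      ∑ e ∈ G.edgeFinset, numMatchings (deleteVerts G {v | v ∈ e}) k := by
  calc (k + 1) * numMatchings G (k + 1) = #((matchings G (k + 1)).sigma fun M => M) := by
        rw [card_sigma, sum_const_nat fun M hM => (mem_matchings.1 hM).2.1, card_matchings,
          mul_comm]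
    _ ≤ #(G.edgeFinset.sigma fun e => matchings (deleteVerts G {v | v ∈ e}) k) := by
        refine card_le_card_of_injOn (fun p => ⟨p.2, p.1.erase p.2⟩) ?_ ?_
        · rintro ⟨M, e⟩ hp
          simp only [coe_sigma, Set.mem_sigma_iff, mem_coe] at hp ⊢
          exact ⟨SimpleGraph.mem_edgeFinset.2 ((mem_matchings.1 hp.1).1 e hp.2),
            erase_mem_matchings_deleteVerts hp.1 hp.2⟩
        · rintro ⟨M₁, e⟩ hp ⟨M₂, e'⟩ hq h
          simp only [coe_sigma, Set.mem_sigma_iff, mem_coe, Sigma.mk.injEq] at hp hq h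
          obtain ⟨rfl, h⟩ := h
          rw [← insert_erase hp.2, ← insert_erase hq.2, eq_of_heq h]
    _ = ∑ e ∈ G.edgeFinset, numMatchings (deleteVerts G {v | v ∈ e}) k := card_sigma _ _

lemma numMatchings_deleteVerts_singleton_add_sum_le (G : SimpleGraph V) (u : V) (k : ℕ) :
    numMatchings (deleteVerts G {u}) (k + 1) +
      ∑ x ∈ G.neighborFinset u, numMatchings (deleteVerts G {v | v ∈ s(u, x)}) k ≤
        numMatchings G (k + 1) := by
  set A := matchings (deleteVerts G {u}) (k + 1)
  set B := fun x => (matchings (deleteVerts G {v | v ∈ s(u, x)}) k).image (insert s(u, x))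
  have hB : ∀ x ∈ G.neighborFinset u, ∀ M ∈ B x,
      M ∈ matchings G (k + 1) ∧ s(u, x) ∈ M ∧ ∀ f ∈ M, u ∈ f → f = s(u, x) := by
    intro x hx M hM
    obtain ⟨N, hN, rfl⟩ := mem_image.1 hM
    refine ⟨insert_mem_matchings ((G.mem_neighborFinset u x).1 hx) hN, mem_insert_self _ _,
      fun f hf hu => ?_⟩
    exact (mem_insert.1 hf).resolve_right fun hfN =>
      notMem_of_mem_matchings_deleteVerts hN hu (Sym2.mem_mk_left u x) hfN
  have hcardB : ∀ x, #(B x) = numMatchings (deleteVerts G {v | v ∈ s(u, x)}) k := fun x =>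
    card_image_of_injOn fun N₁ hN₁ N₂ hN₂ h => by
      rw [← erase_insert (notMem_of_mem_matchings_deleteVerts hN₁ (Sym2.mem_mk_left u x)
          (Sym2.mem_mk_left u x)),
        ← erase_insert (notMem_of_mem_matchings_deleteVerts hN₂ (Sym2.mem_mk_left u x)
          (Sym2.mem_mk_left u x)), h]
  have hdisjB : (G.neighborFinset u : Set V).PairwiseDisjoint B := by
    intro x hx y hy hxy
    refine disjoint_left.2 fun M hMx hMy => hxy ?_
    have := (hB x hx M hMx).2.2 _ (hB y hy M hMy).2.1 (Sym2.mem_mk_left u y)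
    exact (Sym2.congr_right.1 this).symm
  have hdisjA : Disjoint A ((G.neighborFinset u).biUnion B) := by
    refine disjoint_left.2 fun M hMA hMB => ?_
    obtain ⟨x, hx, hMx⟩ := mem_biUnion.1 hMB
    exact notMem_of_mem_matchings_deleteVerts hMA (Sym2.mem_mk_left u x) rfl (hB x hx M hMx).2.1
  calc numMatchings (deleteVerts G {u}) (k + 1) +
        ∑ x ∈ G.neighborFinset u, numMatchings (deleteVerts G {v | v ∈ s(u, x)}) k
      = #(A ∪ (G.neighborFinset u).biUnion B) := by
        rw [card_union_of_disjoint hdisjA, card_biUnion hdisjB, card_matchings]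
        simp only [hcardB]
    _ ≤ numMatchings G (k + 1) := card_le_card <| union_subset
        (fun M hM => (mem_matchings_deleteVerts.1 hM).1)
        (biUnion_subset.2 fun x hx M hM => (hB x hx M hM).1)

end Recursions

section GeneratingFunctions

variable {V : Type*} [Fintype V]

-- One term shorter than `matchGen`, so that shifting the index by one stays within the range of
-- `matchGen`.
noncomputable def matchGenTrunc (H : SimpleGraph V) (t : ℝ) : ℝ :=
  ∑ j ∈ range (Fintype.card V), (numMatchings H j : ℝ) * t ^ j

lemma matchGen_nonneg (G : SimpleGraph V) {t : ℝ} (ht : 0 ≤ t) : 0 ≤ matchGen G t := by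
  unfold matchGen; positivity

lemma mul_matchGenDeriv_nonpos {G : SimpleGraph V} (hE : G.edgeFinset = ∅) {t : ℝ}
    (ht : 0 ≤ t) : t * matchGenDeriv G t ≤ 0 := by
  refine (mul_sum_range_succ_deriv_le (b := 0) (E := 0) ht _ fun i => ?_).trans_eq (by simp)
  have h : (i + 1) * numMatchings G (i + 1) ≤ 0 := by
    simpa [hE] using succ_mul_numMatchings_succ_le G i
  simp only [Pi.zero_apply, mul_zero]
  exact_mod_cast h

end GeneratingFunctions

section EdgeTransitive

variable {V : Type*} [Fintype V] {G : SimpleGraph V}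

lemma SimpleGraph.IsRegularOfDegree.card_mul_eq_two_mul_card_edgeFinset {d : ℕ}
    (hreg : G.IsRegularOfDegree d) : Fintype.card V * d = 2 * #G.edgeFinset := by
  rw [← G.sum_degrees_eq_twice_card_edges, sum_congr rfl fun v _ => hreg v, sum_const,
    smul_eq_mul, card_univ]

def SimpleGraph.IsEdgeTransitive (G : SimpleGraph V) : Prop :=
  ∀ e ∈ G.edgeFinset, ∀ f ∈ G.edgeFinset, ∃ φ : G ≃g G, e.map φ = f

lemma SimpleGraph.IsEdgeTransitive.numMatchings_deleteVerts_eq (hG : G.IsEdgeTransitive)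
    {e f : Sym2 V} (he : e ∈ G.edgeFinset) (hf : f ∈ G.edgeFinset) (k : ℕ) :
    numMatchings (deleteVerts G {v | v ∈ f}) k = numMatchings (deleteVerts G {v | v ∈ e}) k := by
  obtain ⟨φ, rfl⟩ := hG e he f hf
  exact numMatchings_deleteVerts_map φ e k

lemma SimpleGraph.IsEdgeTransitive.succ_mul_numMatchings_succ_le_card_mul
    (hG : G.IsEdgeTransitive) {e : Sym2 V} (he : e ∈ G.edgeFinset) (k : ℕ) :
    (k + 1) * numMatchings G (k + 1) ≤
      #G.edgeFinset * numMatchings (deleteVerts G {v | v ∈ e}) k := by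
  calc (k + 1) * numMatchings G (k + 1)
      ≤ ∑ f ∈ G.edgeFinset, numMatchings (deleteVerts G {v | v ∈ f}) k :=
        succ_mul_numMatchings_succ_le G k
    _ = #G.edgeFinset * numMatchings (deleteVerts G {v | v ∈ e}) k := by
        rw [sum_congr rfl fun f hf => hG.numMatchings_deleteVerts_eq he hf k, sum_const,
          smul_eq_mul]

lemma SimpleGraph.IsEdgeTransitive.numMatchings_deleteVerts_succ_add_mul_le
    (hG : G.IsEdgeTransitive) {d : ℕ} (hreg : G.IsRegularOfDegree d) {u w : V} (huw : G.Adj u w)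
    (k : ℕ) :
    numMatchings (deleteVerts G {v | v ∈ s(u, w)}) (k + 1) +
      d * numMatchings (deleteVerts G {v | v ∈ s(u, w)}) k ≤ numMatchings G (k + 1) := by
  have he : s(u, w) ∈ G.edgeFinset := G.mem_edgeFinset.2 huw
  have hsub : {u} ⊆ {v | v ∈ s(u, w)} := by simp
  calc numMatchings (deleteVerts G {v | v ∈ s(u, w)}) (k + 1) +
        d * numMatchings (deleteVerts G {v | v ∈ s(u, w)}) k
      = numMatchings (deleteVerts G {v | v ∈ s(u, w)}) (k + 1) +
        ∑ x ∈ G.neighborFinset u, numMatchings (deleteVerts G {v | v ∈ s(u, x)}) k := by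
        rw [sum_congr rfl fun x hx => hG.numMatchings_deleteVerts_eq he
          (G.mem_edgeFinset.2 ((G.mem_neighborFinset u x).1 hx)) k, sum_const, smul_eq_mul,
          G.card_neighborFinset_eq_degree, hreg u]
    _ ≤ numMatchings (deleteVerts G {u}) (k + 1) +
        ∑ x ∈ G.neighborFinset u, numMatchings (deleteVerts G {v | v ∈ s(u, x)}) k := by
        gcongr
        exact numMatchings_mono (deleteVerts_anti G hsub) _
    _ ≤ numMatchings G (k + 1) := numMatchings_deleteVerts_singleton_add_sum_le G u k

lemma SimpleGraph.IsEdgeTransitive.mul_matchGenDeriv_le (hG : G.IsEdgeTransitive) {e : Sym2 V}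
    (he : e ∈ G.edgeFinset) {t : ℝ} (ht : 0 ≤ t) :
    t * matchGenDeriv G t ≤ #G.edgeFinset * t * matchGenTrunc (deleteVerts G {v | v ∈ e}) t :=
  mul_sum_range_succ_deriv_le ht _ fun i => by
    exact_mod_cast hG.succ_mul_numMatchings_succ_le_card_mul he i

lemma SimpleGraph.IsEdgeTransitive.one_add_mul_mul_matchGenTrunc_le (hG : G.IsEdgeTransitive)
    {d : ℕ} (hreg : G.IsRegularOfDegree d) {u w : V} (huw : G.Adj u w) {t : ℝ} (ht : 0 ≤ t) :
    (1 + d * t) * matchGenTrunc (deleteVerts G {v | v ∈ s(u, w)}) t ≤ matchGen G t :=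
  one_add_mul_mul_sum_range_le ht _ (fun j => by positivity) (by simp [numMatchings_zero])
    fun i => by exact_mod_cast hG.numMatchings_deleteVerts_succ_add_mul_le hreg huw i

end EdgeTransitive

theorem stmt6 {V : Type*} [Fintype V] (G : SimpleGraph V) (d : ℕ)
    (hreg : G.IsRegularOfDegree d)
    (hedgetrans : ∀ e ∈ G.edgeFinset, ∀ f ∈ G.edgeFinset, ∃ φ : G ≃g G, e.map φ = f)
    (t : ℝ) (ht : 0 ≤ t) :
    2 * t * matchGenDeriv G t / ((Fintype.card V : ℝ) * matchGen G t) ≤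
      d * t / (1 + d * t) := by
  set n := Fintype.card V
  have hdt : 0 ≤ (d : ℝ) * t := by positivity
  have hM : 0 ≤ (n : ℝ) * matchGen G t := by have := matchGen_nonneg G ht; positivity
  refine div_le_div_of_mul_le_mul_of_nonneg hM hdt (by positivity) ?_
  rcases G.edgeFinset.eq_empty_or_nonempty with hE | ⟨e, he⟩
  · nlinarith [mul_matchGenDeriv_nonpos hE ht]
  induction e using Sym2.ind with | _ u w =>
  have hG : G.IsEdgeTransitive := hedgetrans
  set C := matchGenTrunc (deleteVerts G {v | v ∈ s(u, w)}) t
  have hderiv := hG.mul_matchGenDeriv_le he ht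
  have hgen := hG.one_add_mul_mul_matchGenTrunc_le hreg (G.mem_edgeFinset.1 he) ht
  have hnd : (n : ℝ) * d = 2 * #G.edgeFinset := by
    exact_mod_cast hreg.card_mul_eq_two_mul_card_edgeFinset
  calc 2 * t * matchGenDeriv G t * (1 + d * t)
      = 2 * (t * matchGenDeriv G t) * (1 + d * t) := by ring
    _ ≤ 2 * (#G.edgeFinset * t * C) * (1 + d * t) := by gcongr
    _ = d * t * (n * ((1 + d * t) * C)) := by linear_combination (-(t * C * (1 + d * t))) * hnd
    _ ≤ d * t * (n * matchGen G t) := by gcongr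
end
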